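/- For 0 < κ < 1, the derivative of s ↦ s·B(s + κ(1-s), 1-κ) evaluated at s = 1/2 equals ((1-κ)/2)·π·cot((1-κ)π/2)·B((1+κ)/2, 1-κ), and this quantity is positive. -/

import Mathlib

noncomputable def betaFn (x y : ℝ) : ℝ := Real.Gamma x * Real.Gamma y / Real.Gamma (x + y)

/-!
Put `c = 1 - κ`. Rescaling `t = c s` turns the function into `c⁻¹ φ(c s)` with
`φ(t) = t B(1 - c + t, c)`, and the recurrence and the reflection formula give
`φ(t) = Γ(c)/π · Γ(1 - c + t) Γ(1 - t) · sin(π t)`. The Gamma product is invariant under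
`t ↦ c - t`, so its derivative vanishes at `t = c/2`; hence the logarithmic derivative of `φ`
at `c/2` is that of `sin(π t)`, namely `π cot(π c/2)`.
-/

open Real Topology

lemma Real.Gamma_inv_eq_Gamma_one_sub_mul_sin {t : ℝ} (h : sin (π * t) ≠ 0) :
    (Gamma t)⁻¹ = Gamma (1 - t) * sin (π * t) / π := by
  have hrefl := Gamma_mul_Gamma_one_sub t
  have hΓ : Gamma t ≠ 0 := by
    rintro h0
    rw [h0, zero_mul, eq_comm, div_eq_zero_iff] at hrefl
    exact hrefl.elim pi_ne_zero h
  field_simp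
  rw [hrefl]
  field_simp

lemma betaFn_pos {x y : ℝ} (hx : 0 < x) (hy : 0 < y) : 0 < betaFn x y :=
  div_pos (mul_pos (Gamma_pos_of_pos hx) (Gamma_pos_of_pos hy)) (Gamma_pos_of_pos (add_pos hx hy))

lemma mul_betaFn_one_sub_add {c t : ℝ} (h : sin (π * t) ≠ 0) :
    t * betaFn (1 - c + t) c = Gamma c / π * (Gamma (1 - c + t) * Gamma (1 - t)) * sin (π * t) := by
  have ht : t ≠ 0 := by rintro rfl; simp at h
  rw [betaFn, show 1 - c + t + c = t + 1 by ring, Gamma_add_one ht, div_eq_mul_inv, mul_inv,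
    Gamma_inv_eq_Gamma_one_sub_mul_sin h]
  field_simp

lemma deriv_eq_zero_of_comp_const_sub_eq {f : ℝ → ℝ} {a : ℝ} (h : ∀ x, f (a - x) = f x) :
    deriv f (a / 2) = 0 := by
  have := deriv_comp_const_sub (f := f) (a := a) (x := a / 2)
  simp only [h, sub_half] at this
  linarith

lemma hasDerivAt_mul_sin_of_comp_const_sub_eq {g : ℝ → ℝ} {a : ℝ} (K : ℝ)
    (hsymm : ∀ x, g (a - x) = g x) (hg : DifferentiableAt ℝ g (a / 2)) :
    HasDerivAt (fun t => K * g t * sin (π * t)) (K * g (a / 2) * (π * cos (π * (a / 2)))) (a / 2) := by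
  have hg' : HasDerivAt g 0 (a / 2) := by
    rw [← deriv_eq_zero_of_comp_const_sub_eq hsymm]
    exact hg.hasDerivAt
  have hsin : HasDerivAt (fun t => sin (π * t)) (cos (π * (a / 2)) * π) (a / 2) :=
    (hasDerivAt_sin _).comp _ ((hasDerivAt_id _).const_mul π |>.congr_deriv (mul_one π))
  exact ((hg'.const_mul K).mul hsin).congr_deriv (by ring)

lemma hasDerivAt_mul_betaFn_one_sub_add {c : ℝ} (hc0 : 0 < c) (hc2 : c < 2) :
    HasDerivAt (fun t => t * betaFn (1 - c + t) c)
      (π * (cos (π * (c / 2)) / sin (π * (c / 2))) * (c / 2 * betaFn (1 - c + c / 2) c)) (c / 2) := by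
  have hsin : ∀ t ∈ Set.Ioo (0 : ℝ) 1, sin (π * t) ≠ 0 := fun t ht =>
    (sin_pos_of_pos_of_lt_pi (by nlinarith [pi_pos, ht.1]) (by nlinarith [pi_pos, ht.2])).ne'
  have hmem : Set.Ioo (0 : ℝ) 1 ∈ 𝓝 (c / 2) := Ioo_mem_nhds (by linarith) (by linarith)
  have hΓ : ∀ x > 0, DifferentiableAt ℝ Gamma x := fun x hx =>
    differentiableOn_Gamma_Ioi.differentiableAt (Ioi_mem_nhds hx)
  have hsymm : ∀ x, Gamma (1 - c + (c - x)) * Gamma (1 - (c - x)) = Gamma (1 - c + x) * Gamma (1 - x) :=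
    fun x => by rw [mul_comm]; ring_nf
  have hdiff : DifferentiableAt ℝ (fun t => Gamma (1 - c + t) * Gamma (1 - t)) (c / 2) :=
    ((hΓ _ (by linarith)).comp _ (by fun_prop)).mul ((hΓ _ (by linarith)).comp _ (by fun_prop))
  refine ((hasDerivAt_mul_sin_of_comp_const_sub_eq (Gamma c / π) hsymm hdiff).congr_of_eventuallyEq
    (Filter.mem_of_superset hmem fun t ht => mul_betaFn_one_sub_add (hsin t ht))).congr_deriv ?_
  have hsin_half := hsin _ (mem_of_mem_nhds hmem)
  rw [mul_betaFn_one_sub_add hsin_half]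
  generalize sin (π * (c / 2)) = S at hsin_half ⊢
  field_simp

theorem deriv_at_half_kappa_lt_one (κ : ℝ) (hκ0 : 0 < κ) (hκ1 : κ < 1) :
    deriv (fun s : ℝ => s * betaFn (s + κ * (1 - s)) (1 - κ)) (1/2)
      = ((1 - κ) / 2) * Real.pi * ((Real.cos ((1 - κ) / 2 * Real.pi)) / (Real.sin ((1 - κ) / 2 * Real.pi))) *
        betaFn ((1 + κ) / 2) (1 - κ) ∧
    0 < ((1 - κ) / 2) * Real.pi * ((Real.cos ((1 - κ) / 2 * Real.pi)) / (Real.sin ((1 - κ) / 2 * Real.pi))) *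
        betaFn ((1 + κ) / 2) (1 - κ) := by
  set c := 1 - κ with hc
  have hc0 : 0 < c := by linarith
  have hrescale : (fun s : ℝ => s * betaFn (s + κ * (1 - s)) c)
      = fun s => c⁻¹ * ((c * s) * betaFn (1 - c + c * s) c) := by
    funext s
    rw [← mul_assoc, inv_mul_cancel_left₀ hc0.ne', hc]
    ring_nf
  have hderiv : deriv (fun s : ℝ => s * betaFn (s + κ * (1 - s)) c) (1 / 2)
      = deriv (fun t => t * betaFn (1 - c + t) c) (c / 2) := by
    have hcomp := deriv_comp_mul_left c (fun t => t * betaFn (1 - c + t) c) (1 / 2)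
    rw [hrescale, deriv_const_mul_field, hcomp, smul_eq_mul, inv_mul_cancel_left₀ hc0.ne', mul_one_div]
  have hcos : 0 < cos (π * (c / 2)) := cos_pos_of_mem_Ioo ⟨by nlinarith [pi_pos], by nlinarith [pi_pos]⟩
  have hsin : 0 < sin (π * (c / 2)) := sin_pos_of_pos_of_lt_pi (by positivity) (by nlinarith [pi_pos])
  have hB : 0 < betaFn (1 - c / 2) c := betaFn_pos (by linarith) hc0
  rw [hderiv, (hasDerivAt_mul_betaFn_one_sub_add hc0 (by linarith)).deriv,
    show (1 + κ) / 2 = 1 - c / 2 by rw [hc]; ring, show 1 - c + c / 2 = 1 - c / 2 by ring,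
    mul_comm (c / 2) π]
  exact ⟨by ring, by positivity⟩
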